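/- Let Q and X be finite nonempty subsets of ℝ^d, let N = |Q|·|X|, let β, Γ ∈ (0,1] and c ≥ 1 be reals, and let R ≥ 0 be a real with Γdist(Q,X) > cR. On a probability space, let {A_{(q,x)}}_{(q,x) ∈ Q×X} be mutually independent events such that P(A_{(q,x)}) ≤ β/2 whenever ‖q−x‖ > cR. Then the probability that at least (Γ + β/2)·N of the events A_{(q,x)} occur is at most exp(−β²Γ²N/2). -/

import Mathlib

open MeasureTheory ProbabilityTheory Finset

/-- The `R`-object similarity between two finite sets of feature vectors in `ℝ^d`:
the fraction of pairs `(q, x) ∈ Q × X` whose Euclidean distance is at most `R`. -/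
noncomputable def sim {d : ℕ} (Q X : Finset (EuclideanSpace ℝ (Fin d))) (R : ℝ) : ℝ :=
  (Set.ncard {p : EuclideanSpace ℝ (Fin d) × EuclideanSpace ℝ (Fin d) |
      p.1 ∈ Q ∧ p.2 ∈ X ∧ dist p.1 p.2 ≤ R} : ℝ) / ((Q.card : ℝ) * (X.card : ℝ))

/-- The `Γ`-distance between two finite sets of feature vectors:
`inf {R ≥ 0 : sim Q X R ≥ Γ}`. -/
noncomputable def gammaDist {d : ℕ} (Q X : Finset (EuclideanSpace ℝ (Fin d))) (Γ : ℝ) : ℝ :=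
  sInf {R : ℝ | 0 ≤ R ∧ Γ ≤ sim Q X R}

/-! Since `Γdist Q X > cR`, at most `s ≤ Γ N` pairs lie within distance `cR`, and each of the
other `N - s` events has probability at most `β / 2`. So the expected number of occurring events is
at most `s + (N - s) β / 2`, which falls short of `(Γ + β / 2) N` by
`(Γ N - s) (1 - β / 2) + β Γ N / 2 ≥ β Γ N / 2`. Hoeffding's inequality for the `N` independent
indicators bounds the probability of exceeding the mean by `β Γ N / 2` by
`exp (-2 (β Γ N / 2)² / N) = exp (-β² Γ² N / 2)`. -/

lemma Set.ncard_setOf_mem_eq_sum_indicator {α ι : Type*} [Fintype ι] (A : ι → Set α) (a : α) :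
    ({i | a ∈ A i}.ncard : ℝ) = ∑ i, (A i).indicator 1 a := by
  classical
  simp [Set.ncard_eq_toFinset_card', Set.indicator_apply, Finset.sum_boole]

namespace ProbabilityTheory

variable {Ω : Type*} [MeasurableSpace Ω] {μ : Measure Ω} [IsProbabilityMeasure μ]

theorem measureReal_ncard_ge_le_of_iIndepSet {ι : Type*} [Fintype ι] {A : ι → Set Ω}
    (hA : ∀ i, MeasurableSet (A i)) (hindep : iIndepSet A μ) {ε : ℝ} (hε : 0 ≤ ε) :
    μ.real {ω | ∑ i, μ.real (A i) + ε ≤ {i | ω ∈ A i}.ncard} ≤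
      Real.exp (-2 * ε ^ 2 / Fintype.card ι) := by
  have hsubG : ∀ i ∈ (univ : Finset ι), HasSubgaussianMGF
      (fun ω => (A i).indicator 1 ω - μ.real (A i)) ((‖(1 : ℝ) - 0‖₊ / 2) ^ 2) μ := by
    intro i _
    rw [← integral_indicator_one (hA i)]
    refine hasSubgaussianMGF_of_mem_Icc
      (measurable_one.indicator (hA i)).aemeasurable (ae_of_all _ fun ω => ?_)
    by_cases hω : ω ∈ A i <;> simp [hω]
  have hcentered : iIndepFun (fun i ω => (A i).indicator 1 ω - μ.real (A i)) μ :=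
    hindep.iIndepFun_indicator.comp (fun i x => x - μ.real (A i))
      fun i => measurable_id.sub_const _
  have hvar : 2 * ((∑ _i : ι, (‖(1 : ℝ) - 0‖₊ / 2) ^ 2 : NNReal) : ℝ) = Fintype.card ι / 2 := by
    norm_num [div_eq_mul_inv, mul_left_comm]
  have hoeffding := HasSubgaussianMGF.measure_sum_ge_le_of_iIndepFun hcentered hsubG hε
  rw [hvar, div_div_eq_mul_div] at hoeffding
  convert hoeffding using 3
  · ext ω
    simp only [Set.ncard_setOf_mem_eq_sum_indicator, sum_sub_distrib]
    exact le_sub_iff_add_le'.symm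
  · ring

end ProbabilityTheory

lemma Finset.sum_le_card_filter_add_mul {ι : Type*} (s : Finset ι) (P : ι → Prop)
    [DecidablePred P] {f : ι → ℝ} {b : ℝ} (h1 : ∀ i ∈ s, f i ≤ 1)
    (hb : ∀ i ∈ s, ¬ P i → f i ≤ b) :
    ∑ i ∈ s, f i ≤ #(s.filter P) + (#s - #(s.filter P)) * b := by
  have hcard : (#s : ℝ) - #(s.filter P) = #(s.filter (¬ P ·)) := by
    rw [← card_filter_add_card_filter_not (s := s) P]
    push_cast
    ring
  rw [← sum_filter_add_sum_filter_not s P, hcard]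
  gcongr
  · simpa using sum_le_card_nsmul _ f 1 fun i hi => h1 i (mem_filter.1 hi).1
  · simpa using sum_le_card_nsmul _ f b fun i hi => hb i (mem_filter.1 hi).1 (mem_filter.1 hi).2

section ObjectSimilarity

variable {d : ℕ} (Q X : Finset (EuclideanSpace ℝ (Fin d)))

noncomputable def closePairs (r : ℝ) : Finset (Q ×ˢ X : Finset _) :=
  univ.filter fun p => dist p.1.1 p.1.2 ≤ r

lemma sim_eq_card_closePairs_div (r : ℝ) :
    sim Q X r = #(closePairs Q X r) / (#Q * #X) := by
  rw [sim, ← Set.ncard_coe_finset (closePairs Q X r),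
    ← Set.ncard_image_of_injective _ Subtype.val_injective]
  congr
  ext ⟨q, x⟩
  simp [closePairs, and_comm, and_left_comm]

variable {Q X}

lemma sim_lt_of_lt_gammaDist {Γ r : ℝ} (hΓ : 0 < Γ) (h : r < gammaDist Q X Γ) :
    sim Q X r < Γ := by
  by_contra! hle
  have hr : 0 ≤ r := by
    by_contra! hr
    have : closePairs Q X r = ∅ :=
      filter_false_of_mem fun p _ => (hr.trans_le dist_nonneg).not_ge
    rw [sim_eq_card_closePairs_div, this] at hle
    rw [card_empty, Nat.cast_zero, zero_div] at hle
    linarith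
  have : gammaDist Q X Γ ≤ r := csInf_le ⟨0, fun _ hR => hR.1⟩ ⟨hr, hle⟩
  linarith

lemma card_closePairs_le_of_lt_gammaDist {Γ r : ℝ} (hΓ : 0 < Γ) (h : r < gammaDist Q X Γ) :
    (#(closePairs Q X r) : ℝ) ≤ Γ * ((#Q * #X : ℕ) : ℝ) := by
  have hsim := sim_lt_of_lt_gammaDist hΓ h
  rw [sim_eq_card_closePairs_div] at hsim
  have hcard : #(closePairs Q X r) ≤ #Q * #X := by
    simpa [closePairs] using card_filter_le (univ : Finset (Q ×ˢ X : Finset _)) _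
  rcases (#Q * #X).eq_zero_or_pos with hN | hN
  · rw [hN, Nat.le_zero] at hcard
    simp [hN, hcard]
  · push_cast at hN ⊢
    linarith [(div_lt_iff₀ (by exact_mod_cast hN)).1 hsim]

end ObjectSimilarity

theorem stmt_8_general {d : ℕ} {Ω : Type*} [MeasurableSpace Ω] (μ : Measure Ω)
    [IsProbabilityMeasure μ]
    (Q X : Finset (EuclideanSpace ℝ (Fin d)))
    (β Γ c : ℝ) (hβpos : 0 < β) (hβ1 : β ≤ 1) (hΓpos : 0 < Γ)
    (R : ℝ) (hdist : c * R < gammaDist Q X Γ)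
    (A : (Q ×ˢ X : Finset _) → Set Ω)
    (hAmeas : ∀ p, MeasurableSet (A p))
    (hindep : iIndepSet A μ)
    (hPA : ∀ p : (Q ×ˢ X : Finset _), c * R < dist p.1.1 p.1.2 →
      (μ (A p)).toReal ≤ β / 2) :
    (μ {ω | (Γ + β / 2) * ((Q.card * X.card : ℕ) : ℝ) ≤
        (Set.ncard {p : (Q ×ˢ X : Finset _) | ω ∈ A p} : ℝ)}).toReal ≤
      Real.exp (-(β ^ 2 * Γ ^ 2 * ((Q.card * X.card : ℕ) : ℝ) / 2)) := by
  set N : ℝ := ((Q.card * X.card : ℕ) : ℝ)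
  set s : ℝ := ((closePairs Q X (c * R)).card : ℝ)
  have hN : (Fintype.card (Q ×ˢ X : Finset _) : ℝ) = N := by simp [N]
  have hs : s ≤ Γ * N := card_closePairs_le_of_lt_gammaDist hΓpos hdist
  have hmean : ∑ p, μ.real (A p) ≤ s + (N - s) * (β / 2) := by
    have := sum_le_card_filter_add_mul univ (fun p => dist p.1.1 p.1.2 ≤ c * R)
      (fun p _ => measureReal_le_one) fun p _ hp => hPA p (not_le.1 hp)
    rwa [card_univ, hN] at this
  have hε : 0 ≤ β * Γ * N / 2 := by positivity
  have hgap : ∑ p, μ.real (A p) + β * Γ * N / 2 ≤ (Γ + β / 2) * N := by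
    nlinarith [mul_nonneg (sub_nonneg.2 hs) (by linarith : 0 ≤ 1 - β / 2)]
  calc _ ≤ μ.real {ω | ∑ p, μ.real (A p) + β * Γ * N / 2 ≤
          (Set.ncard {p : (Q ×ˢ X : Finset _) | ω ∈ A p} : ℝ)} :=
        measureReal_mono fun ω hω => hgap.trans hω
    _ ≤ Real.exp (-2 * (β * Γ * N / 2) ^ 2 / Fintype.card (Q ×ˢ X : Finset _)) :=
        measureReal_ncard_ge_le_of_iIndepSet hAmeas hindep hε
    _ = _ := by
        rw [hN]
        congr 1
        -- for `N = 0` both exponents are `0`, the left one because `x / 0 = 0`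
        rcases eq_or_ne N 0 with h | h
        · simp [h]
        · field_simp

/-- Per-object content of part P2 of the paper's Lemma 1 with the LSH collision
events abstracted. -/
theorem stmt_8 {d : ℕ} {Ω : Type*} [MeasurableSpace Ω] (μ : Measure Ω)
    [IsProbabilityMeasure μ]
    (Q X : Finset (EuclideanSpace ℝ (Fin d))) (hQ : Q.Nonempty) (hX : X.Nonempty)
    (β Γ c : ℝ) (hβpos : 0 < β) (hβ1 : β ≤ 1) (hΓpos : 0 < Γ) (hΓ1 : Γ ≤ 1) (hc : 1 ≤ c)
    (R : ℝ) (hR : 0 ≤ R) (hdist : c * R < gammaDist Q X Γ)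
    (A : (Q ×ˢ X : Finset _) → Set Ω)
    (hAmeas : ∀ p, MeasurableSet (A p))
    (hindep : iIndepSet A μ)
    (hPA : ∀ p : (Q ×ˢ X : Finset _), c * R < dist p.1.1 p.1.2 →
      (μ (A p)).toReal ≤ β / 2) :
    (μ {ω | (Γ + β / 2) * ((Q.card * X.card : ℕ) : ℝ) ≤
        (Set.ncard {p : (Q ×ˢ X : Finset _) | ω ∈ A p} : ℝ)}).toReal ≤
      Real.exp (-(β ^ 2 * Γ ^ 2 * ((Q.card * X.card : ℕ) : ℝ) / 2)) :=
  stmt_8_general μ Q X β Γ c hβpos hβ1 hΓpos R hdist A hAmeas hindep hPA
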